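/- arXiv:2209.12327 — 2 statements merged into one kernel-verified Lean document; each statement's English description precedes it below -/
import Mathlib

section
/- Let G be a graph, let (T, (X_t : t ∈ V(T))) be a tree-decomposition of G of width at most w, and for each i ≥ 1 let Y_i ⊆ V(T), let T_i be a subtree of T with Y_i ⊆ V(T_i), and let E_i be a set of at most k pairs of vertices of ⋃_{x ∈ Y_i} X_x. Define Z_i as the set of vertices appearing in some pair of E_i, and X'_t := X_t ∪ ⋃_{i : t ∈ V(T_i)} Z_i. Suppose every node of T lies in at most h of the subtrees T_i. Then (T, (X'_t : t ∈ V(T))) is a tree-decomposition of the graph G' with V(G') = V(G) and E(G') = E(G) ∪ ⋃_i E_i, and it has width at most w + 2hk. Moreover X'_t ⊇ X_t for every t. -/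
/-!
Every vertex `v ∈ Z i` already lies in a bag `X x` with `x ∈ Y i ⊆ V(T_i)`, so the nodes
whose bag now contains `v` form the subtree `{t | v ∈ X t}` together with the subtrees `T_i` with
`v ∈ Z i`, each of which meets it; a union of connected sets all meeting one connected set is
connected. A new edge of `E_i` has both ends in `Z i`, which is contained in every bag of `T_i`.
For the width, a node gains at most `h` sets `Z i`, each of size at most `2k`.
-/

open SimpleGraph Set

/-- A tree-decomposition of `G`: a tree `H` with bags `X t ⊆ V`. -/
structure TreeDecomp {V T : Type} (G : SimpleGraph V) (H : SimpleGraph T)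
    (X : T → Set V) : Prop where
  tree : H.IsTree
  covers : ∀ v : V, ∃ t, v ∈ X t
  coversEdge : ∀ ⦃u v : V⦄, G.Adj u v → ∃ t, u ∈ X t ∧ v ∈ X t
  subtree : ∀ v : V, (H.induce {t | v ∈ X t}).Connected

/-- A layering of `G`, given by the layer index of each vertex: endpoints of
an edge lie in the same or consecutive layers. -/
def IsLayering {V : Type} (G : SimpleGraph V) (L : V → ℕ) : Prop :=
  ∀ ⦃u v⦄, G.Adj u v → L u = L v ∨ L u + 1 = L v ∨ L v + 1 = L u

/-- The monochromatic component of `v` under coloring `c`: vertices of color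
`c v` reachable from `v` in the subgraph induced by the color class of `v`. -/
def monoComp {V S : Type} (G : SimpleGraph V) (c : V → S) (v : V) : Set V :=
  {u | ∃ h : c u = c v, (G.induce {w | c w = c v}).Reachable ⟨u, h⟩ ⟨v, rfl⟩}

/-- A coloring has clustering `η` if every monochromatic component has at most
`η` vertices. -/
def HasClustering {V S : Type} (G : SimpleGraph V) (c : V → S) (η : ℕ) : Prop :=
  ∀ v, (monoComp G c v).encard ≤ (η : ℕ∞)

/-- The connected component of `v` in the subgraph of `G` induced by `s`. -/
def compIn {V : Type} (G : SimpleGraph V) (s : Set V) (v : V) : Set V :=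
  {x | ∃ (hx : x ∈ s) (hv : v ∈ s), (G.induce s).Reachable ⟨x, hx⟩ ⟨v, hv⟩}

/-- The external neighborhood `N_G(s)` of a vertex set `s`. -/
def nbrSet {V : Type} (G : SimpleGraph V) (s : Set V) : Set V :=
  {x | x ∉ s ∧ ∃ y ∈ s, G.Adj y x}

lemma Set.encard_biUnion_le_mul {ι α : Type*} (t : Set ι) {s : ι → Set α} {n : ℕ∞}
    (hs : ∀ i ∈ t, (s i).encard ≤ n) : (⋃ i ∈ t, s i).encard ≤ t.encard * n := by
  by_cases ht : t.Finite
  · calc (⋃ i ∈ t, s i).encard = (⋃ i ∈ ht.toFinset, s i).encard := by simp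
      _ ≤ ∑ i ∈ ht.toFinset, (s i).encard := Finset.set_encard_biUnion_le _ _
      _ ≤ ht.toFinset.card • n := Finset.sum_le_card_nsmul _ _ _ (by simpa using hs)
      _ = t.encard * n := by rw [nsmul_eq_mul, ht.encard_eq_coe_toFinset_card]
  rcases eq_or_ne n 0 with rfl | hn
  · simp_all
  · simp [Set.Infinite.encard_eq ht, hn]

lemma Sym2.encard_setOf_mem_le_two {α : Type*} (e : Sym2 α) : {v | v ∈ e}.encard ≤ 2 := by
  induction e with
  | _ a b =>
    have hab : {v | v ∈ s(a, b)} = {a, b} := by ext; simp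
    rw [hab]
    exact (encard_insert_le _ _).trans (by simp [one_add_one_eq_two])

lemma Sym2.encard_setOf_exists_mem_le {α : Type*} (E : Set (Sym2 α)) :
    {v | ∃ e ∈ E, v ∈ e}.encard ≤ 2 * E.encard := by
  have hunion : {v | ∃ e ∈ E, v ∈ e} = ⋃ e ∈ E, {v | v ∈ e} := by ext; simp
  rw [hunion, mul_comm]
  exact encard_biUnion_le_mul E fun e _ => e.encard_setOf_mem_le_two

lemma SimpleGraph.induce_union_biUnion_connected {T ι : Type*} {H : SimpleGraph T} {A : Set T}
    {I : Set ι} {B : ι → Set T} (hA : (H.induce A).Connected)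
    (hB : ∀ i ∈ I, (H.induce (B i)).Connected) (hAB : ∀ i ∈ I, (A ∩ B i).Nonempty) :
    (H.induce (A ∪ ⋃ i ∈ I, B i)).Connected := by
  obtain ⟨⟨a, ha⟩⟩ := hA.nonempty
  refine H.induce_connected_of_patches a (Or.inl ha) fun {v} hv => ?_
  rcases hv with hvA | hvB
  · exact ⟨A, subset_union_left, ha, hvA, hA.preconnected _ _⟩
  · obtain ⟨i, hi, hvi⟩ := mem_iUnion₂.1 hvB
    have hsub : A ∪ B i ⊆ A ∪ ⋃ i ∈ I, B i :=
      union_subset_union_right _ (subset_biUnion_of_mem hi)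
    exact ⟨A ∪ B i, hsub, Or.inl ha, Or.inr hvi,
      induce_union_connected hA.preconnected (hB i hi).preconnected (hAB i hi) _ _⟩

section Augment

variable {V T : Type} {ι : Type*}

def augmentBags (X : T → Set V) (S : ι → Set T) (Z : ι → Set V) (t : T) : Set V :=
  X t ∪ ⋃ i ∈ {i | t ∈ S i}, Z i

variable {X : T → Set V} {S : ι → Set T} {Z : ι → Set V}

lemma subset_augmentBags (t : T) : X t ⊆ augmentBags X S Z t :=
  subset_union_left

lemma subset_augmentBags_of_mem {i : ι} {t : T} (ht : t ∈ S i) : Z i ⊆ augmentBags X S Z t :=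
  (subset_biUnion_of_mem (u := fun i => Z i) ht).trans subset_union_right

lemma setOf_mem_augmentBags (v : V) :
    {t | v ∈ augmentBags X S Z t} = {t | v ∈ X t} ∪ ⋃ i ∈ {i | v ∈ Z i}, S i := by
  ext t
  simp only [augmentBags, mem_ofPred_eq, mem_union, mem_iUnion, exists_prop, and_comm]

lemma encard_augmentBags_le {t : T} {a m b : ℕ∞} (hX : (X t).encard ≤ a)
    (hS : {i | t ∈ S i}.encard ≤ m) (hZ : ∀ i, (Z i).encard ≤ b) :
    (augmentBags X S Z t).encard ≤ a + m * b :=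
  (encard_union_le _ _).trans <| add_le_add hX <|
    (encard_biUnion_le_mul _ fun i _ => hZ i).trans (mul_le_mul_left hS b)

theorem TreeDecomp.augmentBags {G G' : SimpleGraph V} {H : SimpleGraph T}
    (hTD : TreeDecomp G H X) (hS : ∀ i, (H.induce (S i)).Connected)
    (hZ : ∀ i, ∀ v ∈ Z i, ∃ t ∈ S i, v ∈ X t)
    (hG' : ∀ ⦃u v⦄, G'.Adj u v → G.Adj u v ∨ ∃ i, u ∈ Z i ∧ v ∈ Z i) :
    TreeDecomp G' H (augmentBags X S Z) where
  tree := hTD.tree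
  covers v := (hTD.covers v).imp fun t hv => subset_augmentBags t hv
  coversEdge u v huv := by
    rcases hG' huv with hadj | ⟨i, hu, hv⟩
    · obtain ⟨t, hut, hvt⟩ := hTD.coversEdge hadj
      exact ⟨t, subset_augmentBags t hut, subset_augmentBags t hvt⟩
    · obtain ⟨t, ht, -⟩ := hZ i u hu
      exact ⟨t, subset_augmentBags_of_mem ht hu, subset_augmentBags_of_mem ht hv⟩
  subtree v := by
    rw [setOf_mem_augmentBags]
    exact induce_union_biUnion_connected (hTD.subtree v) (fun i _ => hS i)
      fun i hvi => (hZ i v hvi).imp fun t ht => ⟨ht.2, ht.1⟩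

end Augment

theorem stmt_4_general {V T : Type} (w k h : ℕ)
    (G : SimpleGraph V)
    (H : SimpleGraph T) (X : T → Set V) (hTD : TreeDecomp G H X)
    (hw : ∀ t, (X t).encard ≤ (w : ℕ∞) + 1)
    (Y : ℕ → Set T) (St : ℕ → Set T) (E : ℕ → Set (Sym2 V))
    (hsub : ∀ i, (H.induce (St i)).Connected) (hY : ∀ i, Y i ⊆ St i)
    (hE : ∀ i, (E i).encard ≤ (k : ℕ∞))
    (hEloc : ∀ i, ∀ e ∈ E i, ∀ v ∈ e, ∃ x ∈ Y i, v ∈ X x)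
    (hh : ∀ t : T, {i | t ∈ St i}.encard ≤ (h : ℕ∞))
    (G' : SimpleGraph V)
    (hG' : ∀ u v, G'.Adj u v ↔ G.Adj u v ∨ (u ≠ v ∧ ∃ i, s(u, v) ∈ E i))
    (Z : ℕ → Set V) (hZ : ∀ i, Z i = {v | ∃ e ∈ E i, v ∈ e})
    (X' : T → Set V) (hX' : ∀ t, X' t = X t ∪ ⋃ i ∈ {i | t ∈ St i}, Z i) :
    TreeDecomp G' H X' ∧ (∀ t, (X' t).encard ≤ (w : ℕ∞) + 2 * h * k + 1) ∧
      (∀ t, X t ⊆ X' t) := by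
  obtain rfl : X' = augmentBags X St Z := funext hX'
  have hZloc : ∀ i, ∀ v ∈ Z i, ∃ t ∈ St i, v ∈ X t := by
    intro i v hv
    rw [hZ i] at hv
    obtain ⟨e, he, hve⟩ := hv
    exact (hEloc i e he v hve).imp fun x hx => ⟨hY i hx.1, hx.2⟩
  have hG'Z : ∀ ⦃u v⦄, G'.Adj u v → G.Adj u v ∨ ∃ i, u ∈ Z i ∧ v ∈ Z i := by
    intro u v huv
    refine ((hG' u v).1 huv).imp_right fun ⟨_, i, he⟩ => ⟨i, ?_, ?_⟩ <;> rw [hZ]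
    exacts [⟨_, he, Sym2.mem_mk_left u v⟩, ⟨_, he, Sym2.mem_mk_right u v⟩]
  have hZcard : ∀ i, (Z i).encard ≤ 2 * k := fun i =>
    hZ i ▸ (Sym2.encard_setOf_exists_mem_le (E i)).trans (mul_le_mul_right (hE i) 2)
  refine ⟨hTD.augmentBags hsub hZloc hG'Z, fun t => ?_, subset_augmentBags⟩
  calc (augmentBags X St Z t).encard ≤ (w + 1) + h * (2 * k) :=
        encard_augmentBags_le (hw t) (hh t) hZcard
    _ = w + 2 * h * k + 1 := by ring

theorem stmt_4 {V T : Type} (w k h : ℕ)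
    (G : SimpleGraph V)
    (H : SimpleGraph T) (X : T → Set V) (hTD : TreeDecomp G H X)
    (hw : ∀ t, (X t).encard ≤ (w : ℕ∞) + 1)
    (Y : ℕ → Set T) (St : ℕ → Set T) (E : ℕ → Set (Sym2 V))
    (hsub : ∀ i, (H.induce (St i)).Connected) (hY : ∀ i, Y i ⊆ St i)
    (hE : ∀ i, (E i).encard ≤ (k : ℕ∞))
    (hEloc : ∀ i, ∀ e ∈ E i, ∀ v ∈ e, ∃ x ∈ Y i, v ∈ X x)
    (hdiag : ∀ i, ∀ e ∈ E i, ¬ e.IsDiag)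
    (hh : ∀ t : T, {i | t ∈ St i}.encard ≤ (h : ℕ∞))
    (G' : SimpleGraph V)
    (hG' : ∀ u v, G'.Adj u v ↔ G.Adj u v ∨ (u ≠ v ∧ ∃ i, s(u, v) ∈ E i))
    (Z : ℕ → Set V) (hZ : ∀ i, Z i = {v | ∃ e ∈ E i, v ∈ e})
    (X' : T → Set V) (hX' : ∀ t, X' t = X t ∪ ⋃ i ∈ {i | t ∈ St i}, Z i) :
    TreeDecomp G' H X' ∧ (∀ t, (X' t).encard ≤ (w : ℕ∞) + 2 * h * k + 1) ∧
      (∀ t, X t ⊆ X' t) :=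
  stmt_4_general w k h G H X hTD hw Y St E hsub hY hE hEloc hh G' hG' Z hZ X' hX'
end

section
/- Let G be a graph, U_1, U_2 a partition of a vertex set containing V(D) for a connected subgraph D of G, and let G_2 be a graph on U_2 containing all edges of G[U_2] and additionally, for every connected component C of D[V(D) ∩ U_1], all pairs of distinct vertices of N_G(V(C)) ∩ U_2. Then G_2[V(D) ∩ U_2] is connected (assuming V(D) ∩ U_2 ≠ ∅). -/
open SimpleGraph Set

/-
Walk along a path of `G[D]` between two vertices of `U2`. Each edge inside `U2` is
an edge of `G2`, and each maximal stretch inside `U1` lies in one component `C` of `G[D ∩ U1]`;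
its two endpoints in `U2` both belong to `N_G(C)`, hence are equal or adjacent in `G2`.
-/

section

variable {V : Type} {G : SimpleGraph V}

lemma compIn_subset (s : Set V) (v : V) : compIn G s v ⊆ s :=
  fun _ ⟨hx, _⟩ => hx

lemma mem_compIn_self {s : Set V} {v : V} (hv : v ∈ s) : v ∈ compIn G s v :=
  ⟨hv, hv, Reachable.refl _⟩

lemma compIn_eq_of_adj {s : Set V} {x y : V} (hx : x ∈ s) (hy : y ∈ s) (h : G.Adj x y) :
    compIn G s x = compIn G s y := by
  have hxy : (G.induce s).Adj ⟨x, hx⟩ ⟨y, hy⟩ := induce_adj.2 h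
  ext z
  constructor <;> rintro ⟨hz, _, hr⟩
  · exact ⟨hz, hy, hr.trans hxy.reachable⟩
  · exact ⟨hz, hx, hr.trans hxy.symm.reachable⟩

lemma mem_nbrSet_compIn_of_adj {s : Set V} {x y : V} (hx : x ∈ s) (hy : y ∉ s)
    (h : G.Adj x y) : y ∈ nbrSet G (compIn G s x) :=
  ⟨fun hy' => hy (compIn_subset s x hy'), x, mem_compIn_self hx, h⟩

/-- The second conjunct is the invariant that carries the induction through a stretch of the
walk inside `U1`: every vertex of `D ∩ U2` next to the current component of `G[D ∩ U1]` is
already connected to the end of the walk. -/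
lemma reachable_induce_of_walk {G2 : SimpleGraph V} {U1 U2 D : Set V}
    (hdisj : Disjoint U1 U2) (hDsub : D ⊆ U1 ∪ U2)
    (hG2G : ∀ ⦃u v⦄, u ∈ U2 → v ∈ U2 → G.Adj u v → G2.Adj u v)
    (hclique : ∀ v₀ ∈ D ∩ U1, ∀ u v, u ≠ v → u ∈ U2 → v ∈ U2 →
      u ∈ nbrSet G (compIn G (D ∩ U1) v₀) → v ∈ nbrSet G (compIn G (D ∩ U1) v₀) →
      G2.Adj u v)
    {x b : D} (W : (G.induce D).Walk x b) (hb : b.1 ∈ U2) :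
    (∀ hx : x.1 ∈ U2, (G2.induce (D ∩ U2)).Reachable ⟨x, x.2, hx⟩ ⟨b, b.2, hb⟩) ∧
    (x.1 ∈ U1 → ∀ u (hu : u ∈ D ∩ U2), u ∈ nbrSet G (compIn G (D ∩ U1) x) →
      (G2.induce (D ∩ U2)).Reachable ⟨u, hu⟩ ⟨b, b.2, hb⟩) := by
  have notMem_of_mem_U2 : ∀ {z}, z ∈ U2 → z ∉ D ∩ U1 := fun hz hz' =>
    disjoint_left.mp hdisj hz'.2 hz
  induction W with
  | nil => exact ⟨fun _ => Reachable.refl _, fun hx => absurd hb (disjoint_left.mp hdisj hx)⟩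
  | @cons x y b hxy W ih =>
    obtain ⟨ihU2, ihU1⟩ := ih hb
    have hxy : G.Adj x y := hxy
    refine ⟨fun hx => ?_, fun hx u hu hun => ?_⟩
    · rcases hDsub y.2 with hy | hy
      · exact ihU1 hy x ⟨x.2, hx⟩
          (mem_nbrSet_compIn_of_adj ⟨y.2, hy⟩ (notMem_of_mem_U2 hx) hxy.symm)
      · exact (induce_adj.2 (hG2G hx hy hxy) :
          (G2.induce (D ∩ U2)).Adj ⟨x, x.2, hx⟩ ⟨y, y.2, hy⟩).reachable.trans (ihU2 hy)
    · rcases hDsub y.2 with hy | hy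
      · rw [compIn_eq_of_adj (s := D ∩ U1) ⟨x.2, hx⟩ ⟨y.2, hy⟩ hxy] at hun
        exact ihU1 hy u hu hun
      · by_cases huy : u = y.1
        · subst huy
          exact ihU2 hy
        have hyn : y.1 ∈ nbrSet G (compIn G (D ∩ U1) x) :=
          mem_nbrSet_compIn_of_adj ⟨x.2, hx⟩ (notMem_of_mem_U2 hy) hxy
        exact (induce_adj.2 (hclique x.1 ⟨x.2, hx⟩ u y.1 huy hu.2 hy hun hyn) :
          (G2.induce (D ∩ U2)).Adj ⟨u, hu⟩ ⟨y, y.2, hy⟩).reachable.trans (ihU2 hy)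

end

theorem stmt_9_general {V : Type} (G : SimpleGraph V) (U1 U2 : Set V) (hdisj : Disjoint U1 U2)
    (D : Set V) (hDconn : (G.induce D).Connected) (hDsub : D ⊆ U1 ∪ U2)
    (G2 : SimpleGraph V)
    (hG2G : ∀ ⦃u v⦄, u ∈ U2 → v ∈ U2 → G.Adj u v → G2.Adj u v)
    (hclique : ∀ v₀ ∈ D ∩ U1, ∀ u v, u ≠ v → u ∈ U2 → v ∈ U2 →
      u ∈ nbrSet G (compIn G (D ∩ U1) v₀) → v ∈ nbrSet G (compIn G (D ∩ U1) v₀) →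
      G2.Adj u v)
    (hne : (D ∩ U2).Nonempty) :
    (G2.induce (D ∩ U2)).Connected := by
  have := hne.to_subtype
  refine ⟨fun ⟨x, hxD, hxU⟩ ⟨y, hyD, hyU⟩ => ?_⟩
  obtain ⟨W⟩ := hDconn.preconnected ⟨x, hxD⟩ ⟨y, hyD⟩
  exact (reachable_induce_of_walk hdisj hDsub hG2G hclique W hyU).1 hxU

theorem stmt_9 {V : Type} (G : SimpleGraph V) (U1 U2 : Set V) (hdisj : Disjoint U1 U2)
    (D : Set V) (hDconn : (G.induce D).Connected) (hDsub : D ⊆ U1 ∪ U2)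
    (G2 : SimpleGraph V)
    (hG2verts : ∀ ⦃u v⦄, G2.Adj u v → u ∈ U2 ∧ v ∈ U2)
    (hG2G : ∀ ⦃u v⦄, u ∈ U2 → v ∈ U2 → G.Adj u v → G2.Adj u v)
    (hclique : ∀ v₀ ∈ D ∩ U1, ∀ u v, u ≠ v → u ∈ U2 → v ∈ U2 →
      u ∈ nbrSet G (compIn G (D ∩ U1) v₀) → v ∈ nbrSet G (compIn G (D ∩ U1) v₀) →
      G2.Adj u v)
    (hne : (D ∩ U2).Nonempty) :
    (G2.induce (D ∩ U2)).Connected :=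
  stmt_9_general G U1 U2 hdisj D hDconn hDsub G2 hG2G hclique hne
end
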